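/- arXiv:2210.11152 — 7 statements merged into one kernel-verified Lean document; each statement's English description precedes it below -/
import Mathlib

section
/- Let K : ℕ with K ≥ 1. The K-adaptability value equals the infimum of the master (fixed-partition) value over all covers of the uncertainty set: valK K = ⨅ over all families S : Fin K → Set Z with S k ⊆ 𝒵 for every k and ⋃ k, S k = 𝒵, of master S. In particular, an optimal solution of the K-adaptability problem corresponds to an optimal partitioning of 𝒵 together with the optimal decisions of the fixed-partition problem for that partitioning. -/
variable {X Y Z : Type*}

/-- The `K`-adaptability value (problem (2) of the paper). -/
noncomputable def valK (𝒵 : Set Z) (obj : X → Y → Z → ℝ) (feas : X → Y → Z → Prop)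
    (K : ℕ) : EReal :=
  ⨅ (x : X), ⨅ (y : Fin K → Y), ⨆ z ∈ 𝒵,
    ⨅ (k : Fin K) (_ : feas x (y k) z), (obj x (y k) z : EReal)

/-- The master (fixed-partition) value (problem (3) of the paper). -/
noncomputable def master (obj : X → Y → Z → ℝ) (feas : X → Y → Z → Prop)
    {K : ℕ} (S : Fin K → Set Z) : EReal :=
  ⨅ (x : X) (y : Fin K → Y) (_ : ∀ k : Fin K, ∀ z ∈ S k, feas x (y k) z),
    ⨆ (k : Fin K), ⨆ z ∈ S k, (obj x (y k) z : EReal)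

/-- The `K`-adaptability value equals the infimum of the master value over all
covers of the uncertainty set. -/
theorem valK_eq_iInf_master_over_covers [Nonempty X] [Nonempty Y]
    (𝒵 : Set Z) (obj : X → Y → Z → ℝ) (feas : X → Y → Z → Prop)
    (K : ℕ) (hK : 1 ≤ K) :
    valK 𝒵 obj feas K =
      ⨅ (S : Fin K → Set Z)
        (_ : (∀ k : Fin K, S k ⊆ 𝒵) ∧ (⋃ k : Fin K, S k) = 𝒵),
        master obj feas S := by
  classical
  haveI : Nonempty (Fin K) := ⟨⟨0, hK⟩⟩
  apply le_antisymm
  · refine le_iInf fun S => le_iInf fun hS => ?_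
    unfold valK master
    refine le_iInf fun x => le_iInf fun y => le_iInf fun hfeas => ?_
    refine iInf_le_of_le x (iInf_le_of_le y ?_)
    refine iSup₂_le fun z hz => ?_
    obtain ⟨k, hk⟩ := Set.mem_iUnion.1 (hS.2.ge hz)
    refine le_trans (iInf₂_le k (hfeas k z hk)) ?_
    exact le_iSup_of_le k (le_iSup₂_of_le z hk le_rfl)
  · unfold valK
    refine le_iInf fun x => le_iInf fun y => ?_
    by_cases hall : ∀ z ∈ 𝒵, ∃ k : Fin K, feas x (y k) z
    · set f : Z → EReal :=
        fun z => ⨅ (k : Fin K) (_ : feas x (y k) z), (obj x (y k) z : EReal) with hf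
      set S : Fin K → Set Z :=
        fun k => {z ∈ 𝒵 | feas x (y k) z ∧ (obj x (y k) z : EReal) ≤ f z} with hSdef
      have hcover : (∀ k, S k ⊆ 𝒵) ∧ (⋃ k, S k) = 𝒵 := by
        constructor
        · intro k z hz; exact hz.1
        · apply Set.Subset.antisymm
          · exact Set.iUnion_subset fun k z hz => hz.1
          · intro z hz
            obtain ⟨k₀, hk₀⟩ := hall z hz
            obtain ⟨k₁, hk₁mem, hk₁min⟩ :=
              Finset.exists_min_image (Finset.univ.filter (fun k => feas x (y k) z))
                (fun k => obj x (y k) z) ⟨k₀, by simp [hk₀]⟩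
            have hk₁feas : feas x (y k₁) z := (Finset.mem_filter.1 hk₁mem).2
            refine Set.mem_iUnion.2 ⟨k₁, hz, hk₁feas, ?_⟩
            refine le_iInf fun k => le_iInf fun hk => ?_
            exact EReal.coe_le_coe_iff.2 (hk₁min k (by simp [hk]))
      refine iInf_le_of_le S (iInf_le_of_le hcover ?_)
      unfold master
      refine iInf_le_of_le x (iInf_le_of_le y (iInf_le_of_le (fun k z hz => hz.2.1) ?_))
      refine iSup_le fun k => iSup₂_le fun z hz => ?_
      exact le_trans hz.2.2 (le_iSup₂_of_le z hz.1 le_rfl)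
    · push_neg at hall
      obtain ⟨z₀, hz₀, hz₀'⟩ := hall
      refine iInf_le_of_le (fun _ => 𝒵)
        (iInf_le_of_le ⟨fun _ => le_rfl, Set.iUnion_const 𝒵⟩ ?_)
      refine le_trans le_top ?_
      refine le_iSup₂_of_le z₀ hz₀ ?_
      exact le_iInf fun k => le_iInf fun hk => absurd hk (hz₀' k)
end

section
/- Completeness of the branching rule: let K : ℕ and let Ẑ ⊆ 𝒵 be a finite set of scenarios (the scenarios found so far). Then the infimum, over all assignments a : Ẑ → Fin K of the found scenarios to the K subsets, of the master value of the induced family satisfies ⨅ (a : Ẑ → Fin K), master (fun k => {z ∈ Ẑ | a z = k}) ≤ valK K. In other words, among all possible assignments of the found scenarios to the K subsets, at least one node of the branch-and-bound tree has master value that lower-bounds the K-adaptability optimum, which is why all K assignments of a new scenario must be considered. -/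
variable {X Y Z : Type*}

/-- Completeness of the branching rule: among all assignments of the finitely
many scenarios found so far to the `K` subsets, at least one induced master
value lower-bounds the `K`-adaptability optimum. -/
theorem iInf_assignment_master_le_valK [Nonempty X] [Nonempty Y]
    (𝒵 : Set Z) (obj : X → Y → Z → ℝ) (feas : X → Y → Z → Prop)
    (K : ℕ) (Zhat : Set Z) (hfin : Zhat.Finite) (hsub : Zhat ⊆ 𝒵) :
    ⨅ (a : Zhat → Fin K),
        master obj feas (fun k => {z : Z | ∃ h : z ∈ Zhat, a ⟨z, h⟩ = k}) ≤
      valK 𝒵 obj feas K := by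
  rw [valK]
  refine le_iInf fun x => le_iInf fun y => ?_
  set V := ⨆ z ∈ 𝒵, ⨅ (k : Fin K) (_ : feas x (y k) z), (obj x (y k) z : EReal) with hV
  rcases eq_or_ne K 0 with hK | hK
  · subst hK
    rcases Set.eq_empty_or_nonempty Zhat with h | ⟨z0, hz0⟩
    · refine iInf_le_of_le (fun z => absurd z.2 (by simp [h])) ?_
      rw [master]
      refine iInf_le_of_le (Classical.arbitrary X) ?_
      refine iInf_le_of_le (fun k => k.elim0) ?_
      refine iInf_le_of_le (fun k => k.elim0) ?_
      simp
    · have hVtop : V = ⊤ :=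
        top_unique (le_trans (le_of_eq (iInf_of_empty _).symm)
          (le_iSup₂ (f := fun z (_ : z ∈ 𝒵) =>
            ⨅ (k : Fin 0) (_ : feas x (y k) z), (obj x (y k) z : EReal)) z0 (hsub hz0)))
      rw [hVtop]; exact le_top
  · have hKpos : 0 < K := Nat.pos_of_ne_zero hK
    have hKne : Nonempty (Fin K) := Fin.pos_iff_nonempty.mp hKpos
    by_cases hVtop : V = ⊤
    · rw [hVtop]
      exact le_top
    · have hchoice : ∀ z : Zhat, ∃ k : Fin K,
          feas x (y k) (z : Z) ∧ (obj x (y k) (z : Z) : EReal) ≤ V := by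
        rintro ⟨z, hz⟩
        have hle : (⨅ (k : Fin K) (_ : feas x (y k) z), (obj x (y k) z : EReal)) ≤ V :=
          le_iSup₂ (f := fun z (_ : z ∈ 𝒵) =>
            ⨅ (k : Fin K) (_ : feas x (y k) z), (obj x (y k) z : EReal)) z (hsub hz)
        obtain ⟨k0, hk0⟩ := Finite.exists_min
          (fun k : Fin K => ⨅ (_ : feas x (y k) z), (obj x (y k) z : EReal))
        have hk0le : (⨅ (_ : feas x (y k0) z), (obj x (y k0) z : EReal)) ≤ V :=
          le_trans (le_iInf hk0) hle
        by_cases hf : feas x (y k0) z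
        · exact ⟨k0, hf, by rwa [iInf_pos hf] at hk0le⟩
        · rw [iInf_neg hf] at hk0le
          exact absurd (top_unique hk0le) hVtop
      refine iInf_le_of_le (fun z => (hchoice z).choose) ?_
      rw [master]
      refine iInf_le_of_le x (iInf_le_of_le y (iInf_le_of_le ?_ ?_))
      · rintro k z ⟨hz, hak⟩
        exact hak ▸ (hchoice ⟨z, hz⟩).choose_spec.1
      · refine iSup_le fun k => iSup_le fun z => iSup_le ?_
        rintro ⟨hz, hak⟩
        have hak' : (hchoice ⟨z, hz⟩).choose = k := hak
        have h2 := (hchoice ⟨z, hz⟩).choose_spec.2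
        rw [hak'] at h2
        exact h2
end

section
/- Correctness of the subproblem test: fix K, L : ℕ, θ : ℝ, x : X and y : Fin K → Y. Then (θ, x, y) is robust if and only if the subproblem value is nonpositive, i.e. ⨆ (z ∈ 𝒵), ⨅ (k : Fin K), max ((obj x (y k) z − θ : EReal), ⨆ (l : Fin L), (g l x (y k) z : EReal)) ≤ 0. In particular, when the subproblem finds no scenario with positive violation, the current master solution is robust. -/
variable {X Y Z : Type*}

/-- A triple `(θ, x, y)` is robust if every scenario in the uncertainty set is
handled feasibly, and with objective at most `θ`, by at least one of the `K`
second-stage policies. -/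
def IsRobust (𝒵 : Set Z) (obj : X → Y → Z → ℝ) (feas : X → Y → Z → Prop)
    {K : ℕ} (θ : ℝ) (x : X) (y : Fin K → Y) : Prop :=
  ∀ z ∈ 𝒵, ∃ k : Fin K, feas x (y k) z ∧ obj x (y k) z ≤ θ

/-- Correctness of the subproblem test: a master solution is robust iff the
subproblem value (the worst-case over scenarios of the minimal, over policies,
maximal violation) is nonpositive. -/
theorem isRobust_iff_subproblem_nonpos
    (𝒵 : Set Z) (obj : X → Y → Z → ℝ) (feas : X → Y → Z → Prop)
    (K L : ℕ) (g : Fin L → X → Y → Z → ℝ)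
    (hg : ∀ (x : X) (y : Y) (z : Z), feas x y z ↔ ∀ l : Fin L, g l x y z ≤ 0)
    (θ : ℝ) (x : X) (y : Fin K → Y) :
    IsRobust 𝒵 obj feas θ x y ↔
      (⨆ z ∈ 𝒵, ⨅ k : Fin K,
          max ((obj x (y k) z - θ : ℝ) : EReal)
            (⨆ l : Fin L, ((g l x (y k) z : ℝ) : EReal))) ≤ 0 := by
  rw [iSup₂_le_iff]
  constructor
  · intro h z hz
    obtain ⟨k, hfeas, hobj⟩ := h z hz
    refine le_trans (iInf_le _ k) ?_
    rw [max_le_iff]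
    constructor
    · exact_mod_cast sub_nonpos.mpr hobj
    · rw [iSup_le_iff]
      intro l
      exact_mod_cast (hg x (y k) z).mp hfeas l
  · intro h z hz
    have hz0 := h z hz
    have hK : Nonempty (Fin K) := by
      by_contra hne
      have : IsEmpty (Fin K) := not_nonempty_iff.mp hne
      rw [iInf_of_isEmpty] at hz0
      exact absurd hz0 (by simp)
    obtain ⟨k, hk⟩ := Finite.exists_min fun k : Fin K =>
      max ((obj x (y k) z - θ : ℝ) : EReal)
        (⨆ l : Fin L, ((g l x (y k) z : ℝ) : EReal))
    have hkle : max ((obj x (y k) z - θ : ℝ) : EReal)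
        (⨆ l : Fin L, ((g l x (y k) z : ℝ) : EReal)) ≤ 0 :=
      le_trans (le_iInf hk) hz0
    rw [max_le_iff] at hkle
    refine ⟨k, ?_, ?_⟩
    · rw [hg]
      intro l
      have := le_trans (le_iSup _ l) hkle.2
      exact_mod_cast this
    · have : ((obj x (y k) z - θ : ℝ) : EReal) ≤ (0 : ℝ) := hkle.1
      have := EReal.coe_le_coe_iff.mp this
      linarith
end

section
/- Correctness of the big-M reformulation of the subproblem for a fixed scenario: let K and L be nonempty finite types, v : K → L → ℝ, and M : ℝ with M ≥ v k l − v k' l' for all k, k' : K and l, l' : L. Then ⨆ (σ : K → L), ⨅ (p : K × L), (v p.1 p.2 + if σ p.1 = p.2 then 0 else M) = ⨅ (k : K), ⨆ (l : L), v k l. That is, for sufficiently large M, maximizing ζ subject to ζ ≤ v k l + M(1 − γ_{k l}) over one-hot choices γ (encoded by σ) recovers the value min over k of the maximal violation max over l of v k l. -/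
open scoped Classical in
/-- Correctness of the big-M reformulation of the subproblem for a fixed
scenario: for sufficiently large `M`, maximizing over one-hot selections `σ`
the minimum of `v k l + M * (1 - γ k l)` recovers the min-max value. -/
theorem bigM_reformulation
    (K L : Type*) [Fintype K] [Fintype L] [Nonempty K] [Nonempty L]
    (v : K → L → ℝ) (M : ℝ)
    (hM : ∀ (k k' : K) (l l' : L), M ≥ v k l - v k' l') :
    ⨆ σ : K → L, ⨅ p : K × L, (v p.1 p.2 + if σ p.1 = p.2 then 0 else M) =
      ⨅ k : K, ⨆ l : L, v k l := by
  apply le_antisymm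
  · apply ciSup_le
    intro σ
    apply le_ciInf
    intro k
    calc (⨅ p : K × L, (v p.1 p.2 + if σ p.1 = p.2 then 0 else M))
        ≤ v k (σ k) + if σ k = σ k then 0 else M :=
          ciInf_le (Set.finite_range _).bddBelow (k, σ k)
      _ = v k (σ k) := by simp
      _ ≤ ⨆ l, v k l := le_ciSup (Set.finite_range _).bddAbove (σ k)
  · choose σ hσ using fun k => Finite.exists_max (v k)
    obtain ⟨k₀, hk₀⟩ := Finite.exists_min (fun k => ⨆ l, v k l)
    refine le_trans ?_ (le_ciSup (Set.finite_range _).bddAbove σ)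
    apply le_ciInf
    intro p
    by_cases h : σ p.1 = p.2
    · rw [if_pos h, add_zero]
      calc (⨅ k, ⨆ l, v k l) ≤ ⨆ l, v p.1 l :=
            ciInf_le (Set.finite_range _).bddBelow p.1
        _ ≤ v p.1 (σ p.1) := ciSup_le (hσ p.1)
        _ = v p.1 p.2 := by rw [h]
    · rw [if_neg h]
      calc (⨅ k, ⨆ l, v k l) ≤ ⨆ l, v k₀ l :=
            ciInf_le (Set.finite_range _).bddBelow k₀
        _ ≤ v k₀ (σ k₀) := ciSup_le (hσ k₀)
        _ ≤ v p.1 p.2 + M := by have := hM k₀ p.1 (σ k₀) p.2; linarith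
end

section
/- Disjoint partitions suffice: let K : ℕ. The infimum of the master (fixed-partition) value over all covers of 𝒵 equals its infimum over all pairwise disjoint covers: ⨅ over families S : Fin K → Set Z with S k ⊆ 𝒵 for all k and ⋃ k, S k = 𝒵, of master S, equals ⨅ over such families that additionally satisfy Pairwise (Disjoint on S), of master S. (The subsets 𝒵₁, …, 𝒵_K associated with a K-adaptable solution need not be mutually disjoint, but a mutually disjoint partition of 𝒵 achieving the same optimal value can always be constructed.) -/
variable {X Y Z : Type*}

lemma master_antitone (obj : X → Y → Z → ℝ) (feas : X → Y → Z → Prop)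
    {K : ℕ} {S T : Fin K → Set Z} (h : ∀ k, T k ⊆ S k) :
    master obj feas T ≤ master obj feas S := by
  refine le_iInf fun x => le_iInf fun y => le_iInf fun hf => ?_
  refine ((iInf_le _ x).trans ((iInf_le _ y).trans
    ((iInf_le _ (fun k z hz => hf k z (h k hz))).trans ?_)))
  exact iSup_mono fun k => iSup₂_le fun z hz =>
    le_iSup₂ (f := fun z (_ : z ∈ S k) => (obj x (y k) z : EReal)) z (h k hz)

/-- Disjoint partitions suffice: the infimum of the master value over all
covers of the uncertainty set equals its infimum over all pairwise disjoint
covers. -/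
theorem iInf_master_covers_eq_iInf_master_disjoint_covers
    [Nonempty X] [Nonempty Y]
    (𝒵 : Set Z) (obj : X → Y → Z → ℝ) (feas : X → Y → Z → Prop) (K : ℕ) :
    (⨅ (S : Fin K → Set Z)
        (_ : (∀ k : Fin K, S k ⊆ 𝒵) ∧ (⋃ k : Fin K, S k) = 𝒵),
        master obj feas S) =
      ⨅ (S : Fin K → Set Z)
        (_ : ((∀ k : Fin K, S k ⊆ 𝒵) ∧ (⋃ k : Fin K, S k) = 𝒵) ∧
          Pairwise (Function.onFun Disjoint S)),
        master obj feas S := by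
  apply le_antisymm
  · exact le_iInf fun S => le_iInf fun hS => iInf₂_le S hS.1
  · refine le_iInf fun S => le_iInf fun hS => ?_
    set T : Fin K → Set Z := fun k => S k \ ⋃ (j : Fin K) (_ : j < k), S j with hT
    have hTS : ∀ k, T k ⊆ S k := fun k => Set.diff_subset
    have hunion : (⋃ k : Fin K, T k) = 𝒵 := by
      apply le_antisymm
      · rw [← hS.2]
        exact Set.iUnion_mono hTS
      · intro z hz
        rw [← hS.2] at hz
        obtain ⟨k, hk, hmin⟩ := (wellFounded_lt (α := Fin K)).has_min
          {k | z ∈ S k} (Set.mem_iUnion.1 hz)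
        refine Set.mem_iUnion.2 ⟨k, hk, ?_⟩
        simp only [Set.mem_iUnion]
        rintro ⟨j, hjk, hzj⟩
        exact hmin j hzj hjk
    have hdisj : Pairwise (Function.onFun Disjoint T) := by
      intro i j hij
      have key : ∀ i j : Fin K, i < j → Disjoint (T i) (T j) := by
        intro i j hlt
        rw [Set.disjoint_left]
        rintro z ⟨hzi, -⟩ ⟨-, hzj⟩
        exact hzj (Set.mem_iUnion.2 ⟨i, Set.mem_iUnion.2 ⟨hlt, hzi⟩⟩)
      rcases hij.lt_or_gt with h | h
      · exact key _ _ h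
      · exact (key _ _ h).symm
    refine (iInf₂_le T ⟨⟨fun k => (hTS k).trans (hS.1 k), hunion⟩, hdisj⟩).trans ?_
    exact master_antitone obj feas hTS
end

section
/- Exactness of K-adaptability for small finite uncertainty sets: if the uncertainty set 𝒵 is finite and Nat.card 𝒵 ≤ K, then the K-adaptability value coincides with the fully adjustable value: valK K = valAdj. -/
variable {X Y Z : Type*}

/-- The fully adjustable two-stage robust value (problem (1) of the paper). -/
noncomputable def valAdj (𝒵 : Set Z) (obj : X → Y → Z → ℝ)
    (feas : X → Y → Z → Prop) : EReal :=
  ⨅ (x : X), ⨆ z ∈ 𝒵, ⨅ (y : Y) (_ : feas x y z), (obj x y z : EReal)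

/-- Exactness of `K`-adaptability for small finite uncertainty sets: if the
uncertainty set has at most `K` scenarios, the `K`-adaptability value coincides
with the fully adjustable value. -/
theorem valK_eq_valAdj_of_card_le [Nonempty X] [Nonempty Y]
    (𝒵 : Set Z) (obj : X → Y → Z → ℝ) (feas : X → Y → Z → Prop)
    (K : ℕ) (hfin : 𝒵.Finite) (hcard : Nat.card 𝒵 ≤ K) :
    valK 𝒵 obj feas K = valAdj 𝒵 obj feas := by
  classical
  set f : X → Y → Z → EReal := fun x y z => ⨅ (_ : feas x y z), (obj x y z : EReal) with hf
  have key : ∀ x : X, (⨅ (y : Fin K → Y), ⨆ z ∈ 𝒵, ⨅ k, f x (y k) z)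
      = ⨆ z ∈ 𝒵, ⨅ y, f x y z := by
    intro x
    apply le_antisymm
    · set M := ⨆ z ∈ 𝒵, ⨅ y, f x y z with hM
      refine le_of_forall_gt_imp_ge_of_dense fun b hb => ?_
      have hz : ∀ z : 𝒵, ∃ y : Y, f x y z < b := by
        intro z
        have h1 : (⨅ y, f x y (z : Z)) ≤ M :=
          le_iSup₂ (f := fun z (_ : z ∈ 𝒵) => ⨅ y, f x y z) z.1 z.2
        exact iInf_lt_iff.mp (h1.trans_lt hb)
      choose c hc using hz
      haveI : Finite 𝒵 := hfin.to_subtype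
      haveI : Fintype 𝒵 := Fintype.ofFinite _
      obtain ⟨e⟩ : Nonempty (𝒵 ↪ Fin K) := by
        rw [Function.Embedding.nonempty_iff_card_le]
        simpa [Nat.card_eq_fintype_card] using hcard
      set y : Fin K → Y := fun k =>
        if h : ∃ z : 𝒵, e z = k then c h.choose else Classical.arbitrary Y with hy
      refine le_trans (iInf_le _ y) ?_
      refine iSup₂_le fun z hzZ => ?_
      have hk : y (e ⟨z, hzZ⟩) = c ⟨z, hzZ⟩ := by
        have h : ∃ w : 𝒵, e w = e ⟨z, hzZ⟩ := ⟨⟨z, hzZ⟩, rfl⟩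
        have h2 : h.choose = ⟨z, hzZ⟩ := e.injective h.choose_spec
        show (if h : ∃ w : 𝒵, e w = e ⟨z, hzZ⟩ then c h.choose else Classical.arbitrary Y) = c ⟨z, hzZ⟩
        rw [dif_pos h, h2]
      calc (⨅ k, f x (y k) z) ≤ f x (y (e ⟨z, hzZ⟩)) z := iInf_le _ _
        _ = f x (c ⟨z, hzZ⟩) z := by rw [hk]
        _ ≤ b := (hc ⟨z, hzZ⟩).le
    · refine le_iInf fun y => iSup₂_mono fun z hz => ?_
      exact le_iInf fun k => iInf_le _ _
  simp only [valK, valAdj]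
  exact iInf_congr key
end

section
/- Different partitions of the same scenarios yield different optimal values in the paper's Example 1: the optimal master value for the partition 𝒵̄₁ = {z¹, z³}, 𝒵̄₂ = {z²} equals 4, while the optimal master value for the partition 𝒵̄₁ = {z¹}, 𝒵̄₂ = {z², z³} equals 3. Formally, for a partition (𝒵̄₁, 𝒵̄₂), the optimal master value is sInf of the set of θ ∈ ℝ for which there exist x, y₁, y₂ ∈ {0,1}² with x + y_k ≥ (1,1) componentwise for k = 1,2 and, for each k and each z ∈ 𝒵̄_k, zᵀx + 3·z₁·y_{k,1} + 2·z₂·y_{k,2} ≤ θ and y_k ≥ (1,1) − z componentwise. -/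
/-- Membership in `{0,1}²` for a vector in `ℝ²`. -/
def Ex1Binary (v : ℝ × ℝ) : Prop := (v.1 = 0 ∨ v.1 = 1) ∧ (v.2 = 0 ∨ v.2 = 1)

/-- The optimal master value of Example 1 of the paper for the partition
`(𝒵̄₁, 𝒵̄₂)`: the infimum of the objective values `θ` attainable by feasible
decisions `x, y₁, y₂ ∈ {0,1}²`. -/
noncomputable def ex1MasterVal (Z1 Z2 : Set (ℝ × ℝ)) : ℝ :=
  sInf {θ : ℝ | ∃ x y1 y2 : ℝ × ℝ, Ex1Binary x ∧ Ex1Binary y1 ∧ Ex1Binary y2 ∧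
    (1 ≤ x.1 + y1.1 ∧ 1 ≤ x.2 + y1.2) ∧ (1 ≤ x.1 + y2.1 ∧ 1 ≤ x.2 + y2.2) ∧
    (∀ z ∈ Z1, z.1 * x.1 + z.2 * x.2 + 3 * z.1 * y1.1 + 2 * z.2 * y1.2 ≤ θ ∧
      1 - z.1 ≤ y1.1 ∧ 1 - z.2 ≤ y1.2) ∧
    (∀ z ∈ Z2, z.1 * x.1 + z.2 * x.2 + 3 * z.1 * y2.1 + 2 * z.2 * y2.2 ≤ θ ∧
      1 - z.1 ≤ y2.1 ∧ 1 - z.2 ≤ y2.2)}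

lemma ex1_nonneg {v : ℝ × ℝ} (h : Ex1Binary v) : 0 ≤ v.1 ∧ 0 ≤ v.2 := by
  obtain ⟨h1, h2⟩ := h
  constructor
  · rcases h1 with h | h <;> rw [h] <;> norm_num
  · rcases h2 with h | h <;> rw [h] <;> norm_num

/-- Different partitions of the same scenarios `z¹ = (0,0)`, `z² = (1,1)`,
`z³ = (1,0)` yield different optimal master values in Example 1 of the paper:
the partition `𝒵̄₁ = {z¹, z³}, 𝒵̄₂ = {z²}` has optimal value `4`, while the
partition `𝒵̄₁ = {z¹}, 𝒵̄₂ = {z², z³}` has optimal value `3`. -/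
theorem ex1_master_values :
    ex1MasterVal {((0 : ℝ), (0 : ℝ)), ((1 : ℝ), (0 : ℝ))} {((1 : ℝ), (1 : ℝ))} = 4 ∧
      ex1MasterVal {((0 : ℝ), (0 : ℝ))} {((1 : ℝ), (1 : ℝ)), ((1 : ℝ), (0 : ℝ))} = 3 := by
  constructor
  · have e : ex1MasterVal {((0 : ℝ), (0 : ℝ)), ((1 : ℝ), (0 : ℝ))} {((1 : ℝ), (1 : ℝ))}
        = sInf (Set.Ici (4 : ℝ)) := by
      unfold ex1MasterVal
      congr 1
      ext θ
      simp only [Set.mem_setOf_eq, Set.mem_Ici, Set.mem_insert_iff, Set.mem_singleton_iff]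
      constructor
      · rintro ⟨x, y1, y2, hx, hy1, hy2, h1, h2, hZ1, hZ2⟩
        have c1 := hZ1 (0, 0) (Or.inl rfl)
        have c3 := hZ1 (1, 0) (Or.inr rfl)
        have c2 := hZ2 (1, 1) rfl
        norm_num at c1 c3 c2
        obtain ⟨nx1, nx2⟩ := ex1_nonneg hx
        obtain ⟨ny21, ny22⟩ := ex1_nonneg hy2
        -- case split on x.1
        rcases hx.1 with h | h
        · -- x.1 = 0, so y2.1 ≥ 1; use the Z2 constraint
          linarith [c2.1, h2.1, h2.2]
        · -- x.1 = 1, so θ ≥ 1 + 3·y1.1 ≥ 4 since y1.1 ≥ 1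
          linarith [c3.1, c1.2.1]
      · intro hθ
        refine ⟨(0, 1), (1, 1), (1, 0), ⟨Or.inl rfl, Or.inr rfl⟩, ⟨Or.inr rfl, Or.inr rfl⟩,
          ⟨Or.inr rfl, Or.inl rfl⟩, ⟨by norm_num, by norm_num⟩, ⟨by norm_num, by norm_num⟩,
          ?_, ?_⟩
        · rintro z (rfl | rfl) <;> norm_num <;> linarith
        · rintro z rfl
          norm_num
          linarith
    rw [e, csInf_Ici]
  · have e : ex1MasterVal {((0 : ℝ), (0 : ℝ))} {((1 : ℝ), (1 : ℝ)), ((1 : ℝ), (0 : ℝ))}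
        = sInf (Set.Ici (3 : ℝ)) := by
      unfold ex1MasterVal
      congr 1
      ext θ
      simp only [Set.mem_setOf_eq, Set.mem_Ici, Set.mem_insert_iff, Set.mem_singleton_iff]
      constructor
      · rintro ⟨x, y1, y2, hx, hy1, hy2, h1, h2, hZ1, hZ2⟩
        have c2 := hZ2 (1, 1) (Or.inl rfl)
        have c3 := hZ2 (1, 0) (Or.inr rfl)
        norm_num at c2 c3
        obtain ⟨nx1, nx2⟩ := ex1_nonneg hx
        obtain ⟨ny21, ny22⟩ := ex1_nonneg hy2
        -- case split on y2.1
        rcases hy2.1 with h | h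
        · -- y2.1 = 0, so x.1 ≥ 1; use the z = (1,1) constraint with y2.2 ≥ 1
          linarith [c2.1, c3.2.1, h2.1, c3.2.2]
        · -- y2.1 = 1, use z = (1,0) constraint: θ ≥ x.1 + 3
          linarith [c3.1]
      · intro hθ
        refine ⟨(1, 0), (1, 1), (0, 1), ⟨Or.inr rfl, Or.inl rfl⟩, ⟨Or.inr rfl, Or.inr rfl⟩,
          ⟨Or.inl rfl, Or.inr rfl⟩, ⟨by norm_num, by norm_num⟩, ⟨by norm_num, by norm_num⟩,
          ?_, ?_⟩
        · rintro z rfl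
          norm_num
          linarith
        · rintro z (rfl | rfl) <;> norm_num <;> linarith
    rw [e, csInf_Ici]
end
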